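/- arXiv:1707.04847 — 2 statements merged into one kernel-verified Lean document; each statement's English description precedes it below -/
import Mathlib

section
/- In the setting of a unit vector field T with Frenet frame (T, N, B) on a Riemannian 3-manifold, with η = k N^♭ and second fundamental form h_{X,Y} = g(∇_X Y, T) of the distribution D = T^⊥, one has dη(T, B) = k(τ − h_{B,N}) and dη(T, N) = T(k) − k h_{N,N}. -/
variable {R : Type*} [CommRing R] [Algebra ℝ R]

/-- Exterior derivative of a bundled 1-form, evaluated on two vector fields. -/
def extDerOne (ω : Derivation ℝ R R →ₗ[R] R) (X Y : Derivation ℝ R R) : R :=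
  X (ω Y) - Y (ω X) - ω ⁅X, Y⁆

/-- Exterior derivative of a (pointwise-defined) 1-form given as a function on
vector fields. -/
def extDerOneF (α : Derivation ℝ R R → R) (X Y : Derivation ℝ R R) : R :=
  X (α Y) - Y (α X) - α ⁅X, Y⁆

/-- Exterior derivative of a 2-form given as a function on vector fields. -/
def extDerTwo (β : Derivation ℝ R R → Derivation ℝ R R → R)
    (X Y Z : Derivation ℝ R R) : R :=
  X (β Y Z) - Y (β X Z) + Z (β X Y) - β ⁅X, Y⁆ Z + β ⁅X, Z⁆ Y - β ⁅Y, Z⁆ X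

/-- Wedge product of two 1-forms. -/
def wedge11 (α β : Derivation ℝ R R → R) (X Y : Derivation ℝ R R) : R :=
  α X * β Y - α Y * β X

/-- Wedge product of a 1-form and a 2-form. -/
def wedge12 (α : Derivation ℝ R R → R) (β : Derivation ℝ R R → Derivation ℝ R R → R)
    (X Y Z : Derivation ℝ R R) : R :=
  α X * β Y Z - α Y * β X Z + α Z * β X Y

/-- Wedge product of a 2-form and a 1-form. -/
def wedge21 (β : Derivation ℝ R R → Derivation ℝ R R → R) (α : Derivation ℝ R R → R)
    (X Y Z : Derivation ℝ R R) : R :=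
  β X Y * α Z - β X Z * α Y + β Y Z * α X

/-!
Since `g(N, T) = 0`, `dη(T, X) = T(k g(N, X)) - k g(N, [T, X])`. Torsion-freeness writes
`[T, X] = ∇_T X - ∇_X T`, and differentiating `g(T, N) = 0` along `X` turns `-g(∇_X T, N)` into
`h(X, N)`, so `dη(T, X) = T(k g(N, X)) - k (g(∇_T X, N) + h(X, N))`. The Frenet equations for
`∇_T B` and `∇_T N` evaluate this at `X = B` and `X = N`.
-/

section

variable {g : Derivation ℝ R R → Derivation ℝ R R → R}
  {cov : Derivation ℝ R R → Derivation ℝ R R → Derivation ℝ R R}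

theorem metric_sub_left (hg_add : ∀ X Y Z, g (X + Y) Z = g X Z + g Y Z)
    (hg_smul : ∀ (f : R) X Y, g (f • X) Y = f * g X Y) (X Y Z : Derivation ℝ R R) :
    g (X - Y) Z = g X Z - g Y Z := by
  rw [sub_eq_add_neg, hg_add, ← neg_one_smul R Y, hg_smul]
  ring

theorem metric_cov_eq_neg_of_orthogonal
    (compat : ∀ X Y Z, X (g Y Z) = g (cov X Y) Z + g Y (cov X Z))
    {X Y Z : Derivation ℝ R R} (hYZ : g Y Z = 0) :
    g (cov X Y) Z = -g Y (cov X Z) := by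
  have hX := compat X Y Z
  rw [hYZ, map_zero] at hX
  linear_combination -hX

theorem metric_lie_right (hg_symm : ∀ X Y, g X Y = g Y X)
    (hg_add : ∀ X Y Z, g (X + Y) Z = g X Z + g Y Z)
    (hg_smul : ∀ (f : R) X Y, g (f • X) Y = f * g X Y)
    (torsion_free : ∀ X Y, cov X Y - cov Y X = ⁅X, Y⁆) (X Y Z : Derivation ℝ R R) :
    g Z ⁅X, Y⁆ = g (cov X Y) Z - g (cov Y X) Z := by
  rw [← torsion_free, hg_symm, metric_sub_left hg_add hg_smul]

theorem extDerOneF_smul_flat_of_orthogonal {η : Derivation ℝ R R → R} {k : R}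
    {T N : Derivation ℝ R R} (hη : ∀ X, η X = k * g N X) (hNT : g N T = 0)
    (X : Derivation ℝ R R) :
    extDerOneF η T X = T (k * g N X) - k * g N ⁅T, X⁆ := by
  rw [extDerOneF, hη, hη, hη, hNT, mul_zero, map_zero, sub_zero]

theorem extDerOneF_smul_flat (hg_symm : ∀ X Y, g X Y = g Y X)
    (hg_add : ∀ X Y Z, g (X + Y) Z = g X Z + g Y Z)
    (hg_smul : ∀ (f : R) X Y, g (f • X) Y = f * g X Y)
    (compat : ∀ X Y Z, X (g Y Z) = g (cov X Y) Z + g Y (cov X Z))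
    (torsion_free : ∀ X Y, cov X Y - cov Y X = ⁅X, Y⁆) {η : Derivation ℝ R R → R} {k : R}
    {T N : Derivation ℝ R R} (hη : ∀ X, η X = k * g N X) (hTN : g T N = 0)
    (X : Derivation ℝ R R) :
    extDerOneF η T X = T (k * g N X) - k * (g (cov T X) N + g (cov X N) T) := by
  have hNT : g N T = 0 := by rw [hg_symm, hTN]
  rw [extDerOneF_smul_flat_of_orthogonal hη hNT,
    metric_lie_right hg_symm hg_add hg_smul torsion_free,
    metric_cov_eq_neg_of_orthogonal compat hTN, hg_symm T]
  ring

end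

theorem stmt9_general
    (g : Derivation ℝ R R → Derivation ℝ R R → R)
    (cov : Derivation ℝ R R → Derivation ℝ R R → Derivation ℝ R R)
    (hg_symm : ∀ X Y, g X Y = g Y X)
    (hg_add : ∀ X Y Z, g (X + Y) Z = g X Z + g Y Z)
    (hg_smul : ∀ (f : R) X Y, g (f • X) Y = f * g X Y)
    (compat : ∀ X Y Z, X (g Y Z) = g (cov X Y) Z + g Y (cov X Z))
    (torsion_free : ∀ X Y, cov X Y - cov Y X = ⁅X, Y⁆)
    (T N B : Derivation ℝ R R)
    (hNN : g N N = 1)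
    (hTN : g T N = 0) (hNB : g N B = 0)
    (k τ : R)
    (hFr2 : cov T N = (-k) • T + τ • B)
    (hFr3 : cov T B = (-τ) • N)
    (η : Derivation ℝ R R → R)
    (hη : ∀ X, η X = k * g N X)
    (h : Derivation ℝ R R → Derivation ℝ R R → R)
    (hh : ∀ X Y, h X Y = g (cov X Y) T) :
    extDerOneF η T B = k * (τ - h B N) ∧
    extDerOneF η T N = T k - k * h N N := by
  have hdη : ∀ X, extDerOneF η T X = T (k * g N X) - k * (g (cov T X) N + h X N) := by
    intro X
    rw [hh]
    exact extDerOneF_smul_flat hg_symm hg_add hg_smul compat torsion_free hη hTN X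
  have hBN : g B N = 0 := by rw [hg_symm, hNB]
  constructor
  · rw [hdη, hNB, hFr3, hg_smul, hNN, mul_zero, map_zero]
    ring
  · rw [hdη, hNN, hFr2, hg_add, hg_smul, hg_smul, hTN, hBN, mul_one]
    ring

/-- in the Frenet setting, with `η = k N^♭` and second fundamental
form `h(X,Y) = g(∇_X Y, T)` of `D = T^⊥`:
`dη(T,B) = k(τ − h_{B,N})` and `dη(T,N) = T(k) − k h_{N,N}`. -/
theorem stmt9
    (g : Derivation ℝ R R → Derivation ℝ R R → R)
    (cov : Derivation ℝ R R → Derivation ℝ R R → Derivation ℝ R R)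
    (hg_symm : ∀ X Y, g X Y = g Y X)
    (hg_add : ∀ X Y Z, g (X + Y) Z = g X Z + g Y Z)
    (hg_smul : ∀ (f : R) X Y, g (f • X) Y = f * g X Y)
    (hc_addl : ∀ X Y Z, cov (X + Y) Z = cov X Z + cov Y Z)
    (hc_smull : ∀ (f : R) X Y, cov (f • X) Y = f • cov X Y)
    (hc_addr : ∀ X Y Z, cov X (Y + Z) = cov X Y + cov X Z)
    (hc_leib : ∀ (f : R) X Y, cov X (f • Y) = (X f) • Y + f • cov X Y)
    (compat : ∀ X Y Z, X (g Y Z) = g (cov X Y) Z + g Y (cov X Z))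
    (torsion_free : ∀ X Y, cov X Y - cov Y X = ⁅X, Y⁆)
    (T N B : Derivation ℝ R R)
    (hTT : g T T = 1) (hNN : g N N = 1) (hBB : g B B = 1)
    (hTN : g T N = 0) (hTB : g T B = 0) (hNB : g N B = 0)
    (hframe : ∀ X, X = g X T • T + g X N • N + g X B • B)
    (k τ : R)
    (hFr1 : cov T T = k • N)
    (hFr2 : cov T N = (-k) • T + τ • B)
    (hFr3 : cov T B = (-τ) • N)
    (η : Derivation ℝ R R → R)
    (hη : ∀ X, η X = k * g N X)
    (h : Derivation ℝ R R → Derivation ℝ R R → R)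
    (hh : ∀ X Y, h X Y = g (cov X Y) T) :
    extDerOneF η T B = k * (τ - h B N) ∧
    extDerOneF η T N = T k - k * h N N :=
  stmt9_general g cov hg_symm hg_add hg_smul compat torsion_free T N B hNN hTN hNB k τ hFr2 hFr3 η
    hη h hh
end

section
/- Let k : ℝ → ℝ be a positive periodic C² function and τ = c/k² for a constant c ≠ 0, satisfying k'' = τ² k. Then no such k exists; equivalently, the only periodic solutions of the system k'' = τ²k, (kτ)' + τ k' = 0 with k > 0 are k constant and τ = 0. -/
/-!
Since `k > 0`, `k'' = τ² k ≥ 0`, so `k'` is monotone; being periodic as well, `k'` is constant,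
and by Rolle's theorem it vanishes somewhere, so `k` is constant.
Then `0 = k'' = τ² k` forces `τ = 0`, which for `τ = c / k²` contradicts `c ≠ 0`.
-/

open Function

theorem Function.Periodic.deriv {𝕜 F : Type*} [NontriviallyNormedField 𝕜] [NormedAddCommGroup F]
    [NormedSpace 𝕜 F] {f : 𝕜 → F} {c : 𝕜} (hf : Periodic f c) : Periodic (deriv f) c := fun x ↦ by
  rw [← deriv_comp_add_const, show (fun y ↦ f (y + c)) = f from funext hf]

theorem Monotone.eq_of_periodic {α : Type*} [PartialOrder α] {f : ℝ → α} {c : ℝ}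
    (hm : Monotone f) (hp : Periodic f c) (hc : c ≠ 0) (x y : ℝ) : f x = f y := by
  wlog hc_pos : 0 < c generalizing c
  · exact this hp.neg (neg_ne_zero.mpr hc) (by linarith [hc.lt_or_gt.resolve_right hc_pos])
  have le_of_periodic (x y : ℝ) : f x ≤ f y := by
    obtain ⟨n, hn⟩ := exists_nat_ge ((x - y) / c)
    rw [← hp.sub_nat_mul_eq n]
    exact hm (by linarith [(div_le_iff₀ hc_pos).mp hn])
  exact le_antisymm (le_of_periodic x y) (le_of_periodic y x)

theorem exists_deriv_eq_zero_of_periodic {f : ℝ → ℝ} {c : ℝ} (hf : Continuous f)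
    (hp : Periodic f c) (hc : c ≠ 0) : ∃ x, deriv f x = 0 := by
  rcases hc.lt_or_gt with hc_neg | hc_pos
  · obtain ⟨x, -, hx⟩ := exists_deriv_eq_zero hc_neg hf.continuousOn (by simpa using hp 0)
    exact ⟨x, hx⟩
  · obtain ⟨x, -, hx⟩ := exists_deriv_eq_zero hc_pos hf.continuousOn (by simpa using (hp 0).symm)
    exact ⟨x, hx⟩

theorem eq_of_periodic_of_monotone_deriv {f : ℝ → ℝ} {c : ℝ} (hf : Differentiable ℝ f)
    (hm : Monotone (deriv f)) (hp : Periodic f c) (hc : c ≠ 0) (x y : ℝ) : f x = f y := by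
  obtain ⟨z, hz⟩ := exists_deriv_eq_zero_of_periodic hf.continuous hp hc
  have hf' : ∀ t, deriv f t = 0 := fun t ↦ (hm.eq_of_periodic hp.deriv hc t z).trans hz
  exact is_const_of_deriv_eq_zero hf hf' x y

theorem eq_of_periodic_of_deriv_deriv_nonneg {f : ℝ → ℝ} {c : ℝ} (hf : ContDiff ℝ 2 f)
    (hf'' : ∀ x, 0 ≤ deriv (deriv f) x) (hp : Periodic f c) (hc : c ≠ 0) (x y : ℝ) :
    f x = f y :=
  eq_of_periodic_of_monotone_deriv (hf.differentiable two_ne_zero)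
    (monotone_of_deriv_nonneg hf.differentiable_deriv_two hf'') hp hc x y

theorem deriv_deriv_eq_zero_of_forall_eq {f : ℝ → ℝ} (hf : ∀ x y, f x = f y) (x : ℝ) :
    deriv (deriv f) x = 0 := by
  rw [show f = fun _ ↦ f 0 from funext fun y ↦ hf y 0]
  simp

theorem eq_and_eq_zero_of_periodic_of_deriv_deriv_eq_sq_mul {k τ : ℝ → ℝ} {L : ℝ} (hk : ContDiff ℝ 2 k)
    (hk_pos : ∀ x, 0 < k x) (hper : Periodic k L) (hL : L ≠ 0)
    (hode : ∀ x, deriv (deriv k) x = τ x ^ 2 * k x) : (∀ x y, k x = k y) ∧ ∀ x, τ x = 0 := by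
  have hconst := eq_of_periodic_of_deriv_deriv_nonneg hk
    (fun x ↦ by rw [hode x]; exact mul_nonneg (sq_nonneg _) (hk_pos x).le) hper hL
  refine ⟨hconst, fun x ↦ ?_⟩
  have h := (hode x).symm.trans (deriv_deriv_eq_zero_of_forall_eq hconst x)
  simpa [(hk_pos x).ne'] using h

/-- (a) there is no positive periodic `C²` function `k : ℝ → ℝ`
with `τ = c/k²`, `c ≠ 0`, satisfying `k'' = τ² k`; (b) equivalently, the only
periodic solutions of the system `k'' = τ² k`, `(kτ)' + τ k' = 0` with `k > 0`
are `k` constant and `τ = 0`. -/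
theorem stmt16 :
    (∀ (k : ℝ → ℝ) (c L : ℝ), c ≠ 0 → 0 < L →
      ContDiff ℝ 2 k → (∀ x, 0 < k x) → (∀ x, k (x + L) = k x) →
      (∀ x, deriv (deriv k) x = (c / (k x) ^ 2) ^ 2 * k x) → False) ∧
    (∀ (k τ : ℝ → ℝ) (L : ℝ), 0 < L →
      ContDiff ℝ 2 k → ContDiff ℝ 1 τ →
      (∀ x, 0 < k x) → (∀ x, k (x + L) = k x) → (∀ x, τ (x + L) = τ x) →
      (∀ x, deriv (deriv k) x = (τ x) ^ 2 * k x) →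
      (∀ x, deriv (fun y => k y * τ y) x + τ x * deriv k x = 0) →
      (∀ x y, k x = k y) ∧ (∀ x, τ x = 0)) := by
  constructor
  · intro k c L hc hL hk hk_pos hper hode
    have hτ := (eq_and_eq_zero_of_periodic_of_deriv_deriv_eq_sq_mul hk hk_pos hper hL.ne' hode).2 0
    exact hc (by simpa [(hk_pos 0).ne'] using hτ)
  · intro k τ L hL hk _ hk_pos hper _ hode _
    exact eq_and_eq_zero_of_periodic_of_deriv_deriv_eq_sq_mul hk hk_pos hper hL.ne' hode
end
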